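/- Every finite group of order 2·p·q^n, where p and q are odd primes and n ≥ 0, is solvable. -/

import Mathlib

/-!
A Sylow 2-subgroup has order 2, so it is cyclic for the smallest prime divisor of `|G|`,
and Burnside's transfer theorem gives it a normal complement of order `p * q ^ n`.

Groups of order `p * q ^ a` are solvable by induction on the order, once no such group
with `p ≠ q` and `a ≠ 0` is simple. In a simple one there are `p` Sylow `q`-subgroups.
If they met pairwise trivially, counting nonidentity elements would leave room for a
single Sylow `p`-subgroup. Otherwise pick distinct Sylow `q`-subgroups `R₁, R₂` with
`D = R₁ ⊓ R₂` as large as possible. Normalizers grow in `q`-groups, so by maximality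
`N(D)` lies in no Sylow `q`-subgroup and contains an element `g` of order `p`. Then
`G = R₁ ⟨g⟩` with `⟨g⟩` normalizing `D`, so every conjugate of `D` lies in `R₁`, and the
normal closure of `D` is a proper nontrivial normal subgroup.
-/

open Function Subgroup

universe u

namespace Subgroup

variable {G : Type*} [Group G]

theorem card_lt_card_of_lt [Finite G] {H K : Subgroup G} (h : H < K) :
    Nat.card H < Nat.card K :=
  (card_le_of_le h.le).lt_of_ne fun hcard => h.ne (eq_of_le_of_card_ge h.le hcard.ge)

theorem disjoint_of_card_prime_of_not_le [Finite G] {H K : Subgroup G}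
    (hH : (Nat.card H).Prime) (hHK : ¬H ≤ K) : Disjoint H K := by
  rcases (Nat.dvd_prime hH).mp (card_dvd_of_le (inf_le_left : H ⊓ K ≤ H)) with h | h
  · exact disjoint_iff.mpr (card_eq_one.mp h)
  · exact absurd (eq_of_le_of_card_ge inf_le_left h.ge ▸ inf_le_right) hHK

theorem normalClosure_le_of_isComplement' {D R H : Subgroup G} (hRH : IsComplement' R H)
    (hDR : D ≤ R) (hH : H ≤ normalizer (D : Set G)) : normalClosure (D : Set G) ≤ R := by
  refine (closure_le _).mpr fun x hx => ?_
  obtain ⟨d, hd, hdx⟩ := Group.mem_conjugatesOfSet_iff.mp hx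
  obtain ⟨c, rfl⟩ := isConj_iff.mp hdx
  obtain ⟨⟨r, h⟩, rfl, -⟩ := hRH.existsUnique c
  have hconj : (h : G) * d * (h : G)⁻¹ ∈ D := (mem_normalizer_iff.mp (hH h.2) d).mp hd
  rw [show (r : G) * h * d * ((r : G) * h)⁻¹ = r * (h * d * (h : G)⁻¹) * (r : G)⁻¹ by
    group]
  exact R.mul_mem (R.mul_mem r.2 (hDR hconj)) (R.inv_mem r.2)

theorem _root_.IsPGroup.lt_normalizer_inf [Finite G] {q : ℕ} [Fact q.Prime] {D K : Subgroup G}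
    (hK : IsPGroup q K) (hDK : D < K) : D < normalizer (D : Set G) ⊓ K := by
  have := hK.isNilpotent
  have hlt : D.subgroupOf K < normalizer (D.subgroupOf K) :=
    Group.normalizerCondition_of_isNilpotent _ (by
      rw [lt_top_iff_ne_top, Ne, subgroupOf_eq_top]
      exact hDK.not_ge)
  rw [← subgroupOf_normalizer_eq hDK.le] at hlt
  simpa only [subgroupOf_map_subtype, inf_of_le_left hDK.le] using
    map_subtype_lt_map_subtype.mpr hlt

theorem sum_card_sub_one_le [Finite G] {ι : Type*} [Fintype ι] (H : ι → Subgroup G)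
    (hH : Pairwise (Disjoint on H)) : ∑ i, (Nat.card (H i) - 1) ≤ Nat.card G - 1 := by
  classical
  have := Fintype.ofFinite G
  let s i := (H i : Set G).toFinset.erase 1
  have hs : ∀ i, (s i).card = Nat.card (H i) - 1 := fun i => by
    rw [Finset.card_erase_of_mem (by simp), ← Nat.card_eq_card_toFinset]; rfl
  have hdisj : Set.PairwiseDisjoint (↑(Finset.univ : Finset ι)) s := by
    intro i _ j _ hij
    refine Finset.disjoint_left.mpr fun x hxi hxj => ?_
    simp only [s, Finset.mem_erase, Set.mem_toFinset, SetLike.mem_coe] at hxi hxj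
    exact hxi.1 (disjoint_def.mp (hH hij) hxi.2 hxj.2)
  calc ∑ i, (Nat.card (H i) - 1) = (Finset.univ.biUnion s).card := by
        simp only [Finset.card_biUnion hdisj, hs]
    _ ≤ (Finset.univ.erase 1).card :=
        Finset.card_le_card fun x hx => by
          obtain ⟨i, -, hx⟩ := Finset.mem_biUnion.mp hx
          exact Finset.mem_erase.mpr ⟨(Finset.mem_erase.mp hx).1, Finset.mem_univ x⟩
    _ = Nat.card G - 1 := by
        rw [Finset.card_erase_of_mem (Finset.mem_univ _), Finset.card_univ,
          Nat.card_eq_fintype_card]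

end Subgroup

namespace Sylow

variable {G : Type*} [Group G]

theorem card_eq_of_card_eq_pow_mul [Finite G] {p k m : ℕ} [hp : Fact p.Prime] (P : Sylow p G)
    (hG : Nat.card G = p ^ k * m) (hm : ¬p ∣ m) : Nat.card P = p ^ k := by
  have hm0 : m ≠ 0 := by rintro rfl; exact hm (dvd_zero p)
  rw [P.card_eq_multiplicity, hG, Nat.factorization_mul (pow_ne_zero _ hp.out.ne_zero) hm0,
    Finsupp.add_apply, hp.out.factorization_pow, Nat.factorization_eq_zero_of_not_dvd hm]
  simp

theorem eq_of_le {p : ℕ} {P Q : Sylow p G} (h : (P : Subgroup G) ≤ Q) : P = Q :=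
  Sylow.ext (P.is_maximal' Q.isPGroup' h).symm

theorem inf_lt_left {p : ℕ} {P Q : Sylow p G} (h : P ≠ Q) : (P : Subgroup G) ⊓ Q < P :=
  inf_le_left.lt_of_ne fun hPQ => h (eq_of_le (hPQ ▸ inf_le_right))

theorem not_isPGroup_normalizer_inf [Finite G] {q : ℕ} [Fact q.Prime] {R₁ R₂ : Sylow q G}
    (hne : R₁ ≠ R₂) (hmax : ∀ S₁ S₂ : Sylow q G, S₁ ≠ S₂ →
      Nat.card ((S₁ ⊓ S₂ : Subgroup G)) ≤ Nat.card ((R₁ ⊓ R₂ : Subgroup G))) :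
    ¬IsPGroup q (normalizer ((R₁ ⊓ R₂ : Subgroup G) : Set G)) := by
  intro hN
  obtain ⟨Q, hNQ⟩ := hN.exists_le_sylow
  have eq_Q : ∀ R : Sylow q G, (R₁ ⊓ R₂ : Subgroup G) < R → R = Q := fun R hR => by
    by_contra hRQ
    have hlt : (R₁ ⊓ R₂ : Subgroup G) < (R : Subgroup G) ⊓ Q :=
      (R.isPGroup'.lt_normalizer_inf hR).trans_le (le_inf inf_le_right (inf_le_left.trans hNQ))
    exact (card_lt_card_of_lt hlt).not_ge (hmax R Q hRQ)
  exact hne ((eq_Q R₁ (inf_lt_left hne)).trans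
    (eq_Q R₂ (inf_comm (R₁ : Subgroup G) R₂ ▸ inf_lt_left hne.symm)).symm)

end Sylow

theorem Nat.dvd_prime_mul_prime_pow {p q n d : ℕ} (hp : p.Prime) (hq : q.Prime)
    (hd : d ∣ p * q ^ n) : (∃ b, d = q ^ b) ∨ ∃ b, d = p * q ^ b := by
  obtain ⟨d₁, d₂, h₁, h₂, rfl⟩ := Nat.dvd_mul.mp hd
  obtain ⟨b, -, rfl⟩ := (Nat.dvd_prime_pow hq).mp h₂
  rcases (Nat.dvd_prime hp).mp h₁ with rfl | rfl
  · exact .inl ⟨b, one_mul _⟩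
  · exact .inr ⟨b, rfl⟩

theorem Group.isSolvable_of_card_eq_prime_pow {G : Type*} [Group G] [Finite G] {p k : ℕ}
    (hp : p.Prime) (hG : Nat.card G = p ^ k) : Group.IsSolvable G := by
  have := Fact.mk hp
  have := (IsPGroup.of_card hG).isNilpotent
  infer_instance

theorem Group.isSolvable_of_card_dvd {n : ℕ}
    (hsimple : ∀ (H : Type u) [Group H] [Finite H], Nat.card H ∣ n → IsSimpleGroup H →
      Group.IsSolvable H)
    (G : Type u) [Group G] [Finite G] (hG : Nat.card G ∣ n) : Group.IsSolvable G := by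
  induction hc : Nat.card G using Nat.strong_induction_on generalizing G with
  | _ c ih =>
  subst hc
  by_cases hGs : IsSimpleGroup G
  · exact hsimple G hG hGs
  rcases subsingleton_or_nontrivial G with _ | _
  · infer_instance
  obtain ⟨N, hN, hNbot, hNtop⟩ : ∃ N : Subgroup G, N.Normal ∧ N ≠ ⊥ ∧ N ≠ ⊤ := by
    by_contra! h
    exact hGs ⟨fun N hN => or_iff_not_imp_left.mpr (h N hN)⟩
  have hsplit := card_eq_card_quotient_mul_card_subgroup N
  have hN1 := (one_lt_card_iff_ne_bot N).mpr hNbot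
  have hQ1 : 1 < Nat.card (G ⧸ N) := by
    rw [Finite.one_lt_card_iff_nontrivial, QuotientGroup.nontrivial_iff]; exact hNtop
  have : Group.IsSolvable N := ih _ (by rw [hsplit]; exact lt_mul_left (by omega) hQ1) N
    ((card_subgroup_dvd_card N).trans hG) rfl
  have : Group.IsSolvable (G ⧸ N) := ih _ (by rw [hsplit]; exact lt_mul_right (by omega) hN1) _
    ((card_quotient_dvd_card N).trans hG) rfl
  exact (isSolvable_iff_subgroup_quotient N).mpr ⟨‹_›, ‹_›⟩

section PrimeMulPrimePow

variable {G : Type*} [Group G] [Finite G] {p q a : ℕ} [hp : Fact p.Prime] [hq : Fact q.Prime]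

theorem Sylow.card_eq_prime_pow_of_card_eq_prime_mul (hpq : p ≠ q) (hG : Nat.card G = p * q ^ a)
    (Q : Sylow q G) : Nat.card Q = q ^ a :=
  Q.card_eq_of_card_eq_pow_mul (hG.trans (mul_comm _ _))
    ((Nat.prime_dvd_prime_iff_eq hq.out hp.out).not.mpr hpq.symm)

theorem Sylow.card_eq_prime_of_card_eq_prime_mul (hpq : p ≠ q) (hG : Nat.card G = p * q ^ a)
    (P : Sylow p G) : Nat.card P = p := by
  simpa using P.card_eq_of_card_eq_pow_mul (k := 1) (by rw [hG, pow_one])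
    fun h => hpq ((Nat.prime_dvd_prime_iff_eq hp.out hq.out).mp (hp.out.dvd_of_dvd_pow h))

theorem subsingleton_sylow_of_pairwise_disjoint (hpq : p ≠ q) (hG : Nat.card G = p * q ^ a)
    (hnq : Nat.card (Sylow q G) = p)
    (hdisj : Pairwise (Disjoint on fun Q : Sylow q G => (Q : Subgroup G))) :
    Subsingleton (Sylow p G) := by
  have := Fintype.ofFinite (Sylow q G)
  have := Fintype.ofFinite (Sylow p G)
  have hcardQ := Sylow.card_eq_prime_pow_of_card_eq_prime_mul hpq hG
  have hcardP := Sylow.card_eq_prime_of_card_eq_prime_mul hpq hG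
  have hcop (Q : Sylow q G) (P : Sylow p G) : (Nat.card Q).Coprime (Nat.card P) := by
    rw [hcardQ, hcardP]
    exact Nat.Coprime.pow_left _ ((Nat.coprime_primes hq.out hp.out).mpr hpq.symm)
  let H : Sylow q G ⊕ Sylow p G → Subgroup G := Sum.elim (↑) (↑)
  have hpair : Pairwise (Disjoint on H) := by
    rintro (Q₁ | P₁) (Q₂ | P₂) hne
    · exact hdisj fun h => hne (congrArg Sum.inl h)
    · exact disjoint_of_coprime_natCard (hcop Q₁ P₂)
    · exact disjoint_of_coprime_natCard (hcop Q₂ P₁).symm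
    · refine disjoint_of_card_prime_of_not_le ?_ fun hle => hne (congrArg _ (P₁.eq_of_le hle))
      exact (hcardP P₁).symm ▸ hp.out
  have hsum := sum_card_sub_one_le H hpair
  simp only [H, Fintype.sum_sum_type, Sum.elim_inl, Sum.elim_inr, hcardQ, hcardP, Finset.sum_const,
    Finset.card_univ, smul_eq_mul, ← Nat.card_eq_fintype_card, hnq, hG] at hsum
  rw [Nat.mul_sub_one] at hsum
  have hpx : p ≤ p * q ^ a := Nat.le_mul_of_pos_right p (pow_pos hq.out.pos a)
  have hp1 := hp.out.one_lt
  rw [← Finite.card_le_one_iff_subsingleton]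
  exact Nat.le_of_mul_le_mul_right
    (by omega : Nat.card (Sylow p G) * (p - 1) ≤ 1 * (p - 1)) (by omega)

theorem exists_normal_ne_bot_le_sylow_of_not_disjoint (hpq : p ≠ q)
    (hG : Nat.card G = p * q ^ a) {Q₁ Q₂ : Sylow q G} (hne : Q₁ ≠ Q₂)
    (hQ : ¬Disjoint (Q₁ : Subgroup G) Q₂) :
    ∃ N : Subgroup G, N.Normal ∧ N ≠ ⊥ ∧ ∃ R : Sylow q G, N ≤ R := by
  classical
  have := Fintype.ofFinite (Sylow q G)
  obtain ⟨⟨R₁, R₂⟩, hR, hmax⟩ := Finset.exists_max_image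
    {R : Sylow q G × Sylow q G | R.1 ≠ R.2} (fun R => Nat.card ↥((R.1 : Subgroup G) ⊓ R.2))
    ⟨(Q₁, Q₂), by simpa using hne⟩
  replace hR : R₁ ≠ R₂ := by simpa using hR
  set D : Subgroup G := (R₁ : Subgroup G) ⊓ R₂
  replace hmax : ∀ S₁ S₂ : Sylow q G, S₁ ≠ S₂ →
      Nat.card ((S₁ : Subgroup G) ⊓ S₂ : Subgroup G) ≤ Nat.card D :=
    fun S₁ S₂ hS => hmax (S₁, S₂) (by simpa using hS)
  have hD : D ≠ ⊥ := (one_lt_card_iff_ne_bot D).mp <|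
    ((one_lt_card_iff_ne_bot _).mpr (disjoint_iff.not.mp hQ)).trans_le (hmax Q₁ Q₂ hne)
  have hpN : p ∣ Nat.card (normalizer (D : Set G)) := by
    by_contra hpN
    have hdvd : Nat.card (normalizer (D : Set G)) ∣ q ^ a :=
      (Nat.coprime_comm.mp (hp.out.coprime_iff_not_dvd.mpr hpN)).dvd_of_dvd_mul_left
        (hG ▸ card_subgroup_dvd_card _)
    obtain ⟨i, -, hi⟩ := (Nat.dvd_prime_pow hq.out).mp hdvd
    exact Sylow.not_isPGroup_normalizer_inf hR hmax (IsPGroup.of_card hi)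
  obtain ⟨g, hg⟩ := exists_prime_orderOf_dvd_card' p hpN
  have hcompl : IsComplement' R₁ (zpowers (g : G)) := by
    refine isComplement'_of_coprime ?_ ?_ <;>
      rw [Sylow.card_eq_prime_pow_of_card_eq_prime_mul hpq hG, Nat.card_zpowers, orderOf_coe, hg]
    · rw [hG, mul_comm]
    · exact Nat.Coprime.pow_left _ ((Nat.coprime_primes hq.out hp.out).mpr hpq.symm)
  exact ⟨normalClosure D, normalClosure_normal,
    fun h => hD (eq_bot_iff.mpr (h ▸ le_normalClosure)),
    R₁, normalClosure_le_of_isComplement' hcompl inf_le_left (zpowers_le.mpr g.2)⟩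

theorem not_isSimpleGroup_of_card_eq_prime_mul_prime_pow (hpq : p ≠ q) (ha : a ≠ 0)
    (hG : Nat.card G = p * q ^ a) : ¬IsSimpleGroup G := by
  intro hsimple
  have hcardQ := Sylow.card_eq_prime_pow_of_card_eq_prime_mul hpq hG
  have hp1 := hp.out.one_lt
  have hq1 : 1 < q ^ a := Nat.one_lt_pow ha hq.out.one_lt
  have hnormal (N : Subgroup G) (hN : N.Normal) (h1 : 1 < Nat.card N)
      (h2 : Nat.card N < Nat.card G) : False :=
    (IsSimpleGroup.eq_bot_or_eq_top_of_normal N hN).elim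
      (fun h => by simp [h] at h1) (fun h => by simp [h] at h2)
  have hQG : ∀ Q : Sylow q G, Nat.card Q < Nat.card G := fun Q => by
    rw [hcardQ, hG]; exact lt_mul_left (by omega) hp1
  obtain ⟨Q⟩ : Nonempty (Sylow q G) := inferInstance
  have hnq : Nat.card (Sylow q G) = p := by
    have hindex : (Q : Subgroup G).index = p := by
      have := card_mul_index (Q : Subgroup G)
      rw [hcardQ, hG, mul_comm p] at this
      exact Nat.eq_of_mul_eq_mul_left (by omega) this
    refine ((Nat.dvd_prime hp.out).mp (Q.card_dvd_index.trans (dvd_of_eq hindex))).resolve_left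
      fun h1 => ?_
    have := Finite.card_le_one_iff_subsingleton.mp h1.le
    exact hnormal Q Q.normal_of_subsingleton (hcardQ Q ▸ hq1) (hQG Q)
  by_cases hdisj : Pairwise (Disjoint on fun Q : Sylow q G => (Q : Subgroup G))
  · have := subsingleton_sylow_of_pairwise_disjoint hpq hG hnq hdisj
    obtain ⟨P⟩ : Nonempty (Sylow p G) := inferInstance
    have hcardP := P.card_eq_prime_of_card_eq_prime_mul hpq hG
    exact hnormal P P.normal_of_subsingleton (by rw [hcardP]; exact hp1)
      (by rw [hcardP, hG]; exact lt_mul_right (by omega) hq1)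
  · obtain ⟨Q₁, Q₂, hne, hQ⟩ :
        ∃ Q₁ Q₂ : Sylow q G, Q₁ ≠ Q₂ ∧ ¬Disjoint (Q₁ : Subgroup G) Q₂ := by
      simpa [Pairwise] using hdisj
    obtain ⟨N, hN, hNbot, R, hNR⟩ := exists_normal_ne_bot_le_sylow_of_not_disjoint hpq hG hne hQ
    exact hnormal N hN ((one_lt_card_iff_ne_bot N).mpr hNbot)
      ((card_le_of_le hNR).trans_lt (hQG R))

end PrimeMulPrimePow

theorem isSolvable_of_card_eq_prime_mul_prime_pow {G : Type*} [Group G] [Finite G] {p q n : ℕ}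
    (hp : p.Prime) (hq : q.Prime) (hG : Nat.card G = p * q ^ n) : Group.IsSolvable G := by
  refine Group.isSolvable_of_card_dvd (fun H _ _ hH hsimple => ?_) G (dvd_of_eq hG)
  rcases Nat.dvd_prime_mul_prime_pow hp hq hH with ⟨b, hb⟩ | ⟨b, hb⟩
  · exact Group.isSolvable_of_card_eq_prime_pow hq hb
  by_cases hpq : p = q
  · subst hpq
    exact Group.isSolvable_of_card_eq_prime_pow hp (hb.trans (pow_succ' p b).symm)
  by_cases hb0 : b = 0
  · subst hb0
    exact Group.isSolvable_of_card_eq_prime_pow hp (k := 1) (by simpa using hb)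
  have := Fact.mk hp
  have := Fact.mk hq
  exact (not_isSimpleGroup_of_card_eq_prime_mul_prime_pow hpq hb0 hb hsimple).elim

theorem solvable_of_order_two_p_q_pow (G : Type*) [Group G] [Finite G]
    (p q : ℕ) (hp : p.Prime) (hq : q.Prime) (hpodd : Odd p) (hqodd : Odd q)
    (n : ℕ) (h : Nat.card G = 2 * p * q ^ n) :
    IsSolvable G := by
  have : Fact (Nat.Prime 2) := ⟨Nat.prime_two⟩
  obtain ⟨P⟩ : Nonempty (Sylow 2 G) := inferInstance
  have hP : Nat.card P = 2 := by
    simpa using P.card_eq_of_card_eq_pow_mul (k := 1) (by rw [h, pow_one, mul_assoc])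
      (Nat.odd_mul.mpr ⟨hpodd, hqodd.pow⟩).not_two_dvd_nat
  have h2 : (Nat.card G).minFac = 2 :=
    (Nat.minFac_eq_two_iff _).mpr ⟨p * q ^ n, by rw [h, mul_assoc]⟩
  have hcyc : IsCyclic P := isCyclic_of_prime_card hP
  set φ := MonoidHom.transferSylow P (hcyc.normalizer_le_centralizer h2)
  have hKcard : Nat.card φ.ker = p * q ^ n := by
    have := (hcyc.isComplement' h2).card_mul_card
    rw [hP, h, mul_assoc, mul_comm] at this
    exact Nat.eq_of_mul_eq_mul_left two_pos this
  have := isSolvable_of_card_eq_prime_mul_prime_pow hp hq hKcard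
  have := Group.isSolvable_of_card_eq_prime_pow Nat.prime_two (hP.trans (pow_one 2).symm)
  exact Group.isSolvable_of_ker_le_range φ.ker.subtype φ (range_subtype _).ge
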